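/- arXiv:1407.3364 — 2 statements merged into one kernel-verified Lean document; each statement's English description precedes it below -/
import Mathlib

section
/- The recurrence g_{n+1} = (|g_n| + g_n)/2 - g_{n-1} is periodic with period 5: for any real initial values, g_{n+5} = g_n for all n. -/
/-!
Since `(|x| + x) / 2 = max x 0`, the recurrence is `g (n + 1) + g (n - 1) = max (g n) 0`, the
tropicalization of Lyness' 5-periodic recurrence `u (n + 1) * u (n - 1) = u n + 1`. Five steps
of it depend only on the signs of the four intermediate terms; on each of the sixteen sign patterns
the recurrence is linear, and either the pattern is inconsistent or it forces the fifth term to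
equal the first.
-/

lemma abs_add_self_div_two (x : ℝ) : (|x| + x) / 2 = max x 0 := by
  rcases le_total x 0 with hx | hx
  · rw [abs_of_nonpos hx, max_eq_right hx]; ring
  · rw [abs_of_nonneg hx, max_eq_left hx]; ring

theorem add_five_eq_of_add_two_eq_max_sub (x : ℕ → ℝ)
    (h : ∀ n, x (n + 2) = max (x (n + 1)) 0 - x n) (n : ℕ) : x (n + 5) = x n := by
  have h2 : x (n + 2) = max (x (n + 1)) 0 - x n := h n
  have h3 : x (n + 3) = max (x (n + 2)) 0 - x (n + 1) := h (n + 1)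
  have h4 : x (n + 4) = max (x (n + 3)) 0 - x (n + 2) := h (n + 2)
  have h5 : x (n + 5) = max (x (n + 4)) 0 - x (n + 3) := h (n + 3)
  rcases max_cases (x (n + 1)) 0 with ⟨e1, s1⟩ | ⟨e1, s1⟩ <;>
  rcases max_cases (x (n + 2)) 0 with ⟨e2, s2⟩ | ⟨e2, s2⟩ <;>
  rcases max_cases (x (n + 3)) 0 with ⟨e3, s3⟩ | ⟨e3, s3⟩ <;>
  rcases max_cases (x (n + 4)) 0 with ⟨e4, s4⟩ | ⟨e4, s4⟩ <;>
  linarith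

theorem G_recurrence_period_five
    (g : ℕ → ℝ)
    (hrec : ∀ n, 1 ≤ n → g (n + 1) = (|g n| + g n) / 2 - g (n - 1)) :
    ∀ n, g (n + 5) = g n :=
  add_five_eq_of_add_two_eq_max_sub g fun n => by
    rw [hrec (n + 1) n.succ_pos, abs_add_self_div_two, Nat.add_sub_cancel]
end

section
/- The map F of the plane defined by F(x,y) = ((|x| - x)/2 - y, x) is periodic with period 7. -/
/-!
`F` is linear on each of the half-planes `x ≥ 0` and `x ≤ 0`. Along the orbit of `(x, y)`
the first coordinate runs through `±x`, `±y`, `±(x - y)` and `±(x + y)`, so on each cone cut out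
by the signs of `x`, `y`, `x - y`, `x + y` the map `F^[7]` is a fixed product of seven linear
maps, and that product is the identity. Since `7` is prime, any point that `F` moves has minimal
period exactly `7`, so no smaller iterate is the identity.
-/

open Function

theorem Function.iterate_ne_id_of_iterate_prime_eq_id {α : Type*} {f : α → α} {p k : ℕ}
    (hp : p.Prime) (hf : f^[p] = id) (hne : f ≠ id) (hk : 0 < k) (hkp : k < p) :
    f^[k] ≠ id := by
  have := Fact.mk hp
  intro hk_id
  obtain ⟨x, hx⟩ := ne_iff.mp hne
  have hmin : minimalPeriod f x = p := minimalPeriod_eq_prime (congrFun hf x) hx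
  have hdvd : p ∣ k := hmin ▸ IsPeriodicPt.minimalPeriod_dvd (congrFun hk_id x)
  exact (Nat.le_of_dvd hk hdvd).not_gt hkp

section

variable {F : ℝ × ℝ → ℝ × ℝ} (hF : ∀ x y : ℝ, F (x, y) = ((|x| - x) / 2 - y, x))
include hF

theorem F_apply_of_nonneg {x : ℝ} (y : ℝ) (hx : 0 ≤ x) : F (x, y) = (-y, x) := by
  rw [hF, abs_of_nonneg hx]
  ring_nf

theorem F_apply_of_nonpos {x : ℝ} (y : ℝ) (hx : x ≤ 0) : F (x, y) = (-x - y, x) := by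
  rw [hF, abs_of_nonpos hx]
  ring_nf

theorem F_iterate_seven_apply (x y : ℝ) : F^[7] (x, y) = (x, y) := by
  -- `linarith` rather than `ring`: a few sign patterns force `x = y = 0`.
  rcases le_total 0 x with hx | hx <;> rcases le_total 0 y with hy | hy <;>
    rcases le_total x y with hxy | hxy <;> rcases le_total 0 (x + y) with hs | hs <;>
    simp (disch := grind) only [iterate_succ_apply', iterate_zero_apply,
      F_apply_of_nonneg hF, F_apply_of_nonpos hF] <;>
    ext <;> linarith

end

theorem F_map_period_seven
    (F : ℝ × ℝ → ℝ × ℝ)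
    (hF : ∀ x y : ℝ, F (x, y) = ((|x| - x) / 2 - y, x)) :
    F^[7] = id ∧ ∀ k, 1 ≤ k → k < 7 → F^[k] ≠ id := by
  have hperiod : F^[7] = id := funext fun p => F_iterate_seven_apply hF p.1 p.2
  have hne : F ≠ id := fun hid => by
    have h := congrFun hid (1, 0)
    rw [F_apply_of_nonneg hF 0 zero_le_one] at h
    simp at h
  exact ⟨hperiod, fun k hk hk7 =>
    iterate_ne_id_of_iterate_prime_eq_id Nat.prime_seven hperiod hne hk hk7⟩
end
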